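/- arXiv:2403.05929 — 3 statements merged into one kernel-verified Lean document; each statement's English description precedes it below -/
import Mathlib

section
/- Let $1<p_1<p_2<\infty$, $0<\gamma<n$, and let $\mu$ be a positive Borel measure on $\mathbb{R}^n$. If for every ball $B$ the Riesz potential satisfies $\|I_\gamma \chi_B\|_{L^{p_2}(\mu)} \leq C \|\chi_B\|_{L^{p_1}(m)} = C\,[m(B)]^{1/p_1}$, then $\mu(B) \leq C' [m(B)]^{p_2(\frac{1}{p_1}-\frac{\gamma}{n})}$ for every ball $B$, with $C'$ depending only on $C,n,\gamma,p_1,p_2$. -/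
open MeasureTheory ENNReal

/-- The Riesz potential `I_γ f (x) = ∫ |x-y|^(γ-n) f(y) dm(y)` on `ℝⁿ`. -/
noncomputable def rieszPotential (n : ℕ) (γ : ℝ) (f : EuclideanSpace ℝ (Fin n) → ℝ)
    (x : EuclideanSpace ℝ (Fin n)) : ℝ :=
  ∫ y, ‖x - y‖ ^ (γ - (n : ℝ)) * f y

/-!
On a ball `B = B(z, r)` any two points are at distance less than `2r`, and `t ↦ t ^ (γ - n)` is
decreasing, so `I_γ χ_B ≥ (2r) ^ (γ - n) m(B)` on `B`; the kernel is integrable near the diagonal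
because `γ > 0`. Hence `‖I_γ χ_B‖_{L^{p₂}(μ)} ≥ (2r) ^ (γ - n) m(B) μ(B) ^ (1/p₂)`, and since
`m(B) = r ^ n m(B(0, 1))` this lower bound equals `c · m(B) ^ (γ/n) μ(B) ^ (1/p₂)` for a constant
`c > 0` depending on `n` and `γ`. Comparing with `C m(B) ^ (1/p₁)` and raising to the power `p₂`
gives the growth bound with `C' = (C / c) ^ p₂`.
-/

open Metric Set

section NormSubRpow

variable {E : Type*} [NormedAddCommGroup E] [MeasurableSpace E]

theorem integrableOn_ball_norm_sub_rpow [NormedSpace ℝ E] [FiniteDimensional ℝ E] [BorelSpace E]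
    {μ : Measure E} [μ.IsAddHaarMeasure] (hE : 1 ≤ Module.finrank ℝ E) {s : ℝ}
    (hs : -(Module.finrank ℝ E : ℝ) < s) (x : E) (R : ℝ) :
    IntegrableOn (fun y => ‖x - y‖ ^ s) (ball x R) μ := by
  have hball : IntegrableOn (fun y : E => ‖y‖ ^ s) (ball 0 R) μ :=
    integrableOn_ball_of_norm_le_rpow hE (C := 1) (α := -s) (by linarith)
      (ae_of_all _ fun y => by
        rw [neg_neg, one_mul, Real.norm_of_nonneg (Real.rpow_nonneg (norm_nonneg y) s)])
      (measurable_norm.pow_const s).aestronglyMeasurable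
  have hshift : (ball x R).indicator (fun y => ‖x - y‖ ^ s)
      = fun y => (ball 0 R).indicator (fun y => ‖y‖ ^ s) (x - y) := by
    ext y
    simp only [indicator, mem_ball, dist_eq_norm, sub_zero, norm_sub_rev x y]
  rw [← integrable_indicator_iff measurableSet_ball, hshift]
  exact ((integrable_indicator_iff measurableSet_ball).2 hball).comp_sub_left x

theorem mul_measureReal_le_setIntegral_norm_sub_rpow
    {μ : Measure E} [NullSingletonClass μ] {S : Set E} {x : E} {d s : ℝ} (hs : s ≤ 0)
    (hS : MeasurableSet S) (hSμ : μ S ≠ ⊤) (hSd : S ⊆ closedBall x d)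
    (hint : IntegrableOn (fun y => ‖x - y‖ ^ s) S μ) :
    d ^ s * μ.real S ≤ ∫ y in S, ‖x - y‖ ^ s ∂μ := by
  -- only almost everywhere: at `y = x` the integrand is `0 ^ s = 0` when `s < 0`
  rw [mul_comm, ← smul_eq_mul, ← setIntegral_const]
  refine setIntegral_mono_on_ae (integrableOn_const hSμ) hint hS ?_
  filter_upwards [Measure.ae_ne μ x] with y hyx hyS
  have hdist : ‖x - y‖ ≤ d := by
    simpa [dist_eq_norm, norm_sub_rev] using hSd hyS
  exact Real.rpow_le_rpow_of_nonpos (norm_pos_iff.2 (sub_ne_zero.2 hyx.symm)) hdist hs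

end NormSubRpow

theorem ofReal_mul_measure_rpow_le_eLpNorm {α : Type*} [MeasurableSpace α] {μ : Measure α}
    {f : α → ℝ} {S : Set α} {a : ℝ} {p : ℝ≥0∞} (hS : MeasurableSet S) (ha : 0 ≤ a)
    (hf : ∀ x ∈ S, a ≤ f x) (hp0 : p ≠ 0) (hp : p ≠ ⊤) :
    ENNReal.ofReal a * μ S ^ (1 / p.toReal) ≤ eLpNorm f p μ := by
  rw [← Real.enorm_eq_ofReal ha, ← eLpNorm_indicator_const hS hp0 hp]
  refine eLpNorm_mono fun x => ?_
  by_cases hx : x ∈ S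
  · rw [indicator_of_mem hx, Real.norm_of_nonneg ha]
    exact (hf x hx).trans (le_abs_self _)
  · simp [indicator_of_notMem hx]

theorem ENNReal.le_div_rpow_mul_rpow_of_mul_rpow_mul_rpow_le {c v m C : ℝ≥0∞} {a b p : ℝ}
    (hp : 0 < p) (hc0 : c ≠ 0) (hc : c ≠ ⊤) (hv0 : v ≠ 0) (hv : v ≠ ⊤)
    (h : c * v ^ a * m ^ (1 / p) ≤ C * v ^ b) :
    m ≤ (C / c) ^ p * v ^ (p * (b - a)) := by
  have hva0 : v ^ a ≠ 0 := (ENNReal.rpow_pos (pos_iff_ne_zero.2 hv0) hv).ne'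
  have hva : v ^ a ≠ ⊤ := by simp [ENNReal.rpow_eq_top_iff, hv0, hv]
  have hroot : m ^ (1 / p) ≤ C / c * v ^ (b - a) := by
    rw [← ENNReal.mul_le_mul_iff_right (mul_ne_zero hc0 hva0) (ENNReal.mul_ne_top hc hva)]
    calc c * v ^ a * m ^ (1 / p) ≤ C * v ^ b := h
      _ = c * v ^ a * (C / c * v ^ (b - a)) := by
        rw [mul_mul_mul_comm, ENNReal.mul_div_cancel hc0 hc, ← ENNReal.rpow_add _ _ hv0 hv,
          add_sub_cancel]
  calc m = (m ^ (1 / p)) ^ p := by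
        rw [← ENNReal.rpow_mul, one_div_mul_cancel hp.ne', ENNReal.rpow_one]
    _ ≤ (C / c * v ^ (b - a)) ^ p := ENNReal.rpow_le_rpow hroot hp.le
    _ = (C / c) ^ p * v ^ (p * (b - a)) := by
        rw [ENNReal.mul_rpow_of_nonneg _ _ hp.le, ← ENNReal.rpow_mul, mul_comm (b - a)]

theorem two_mul_rpow_sub_mul_pow_mul_eq {n : ℕ} (hn : n ≠ 0) {γ r K : ℝ} (hr : 0 < r)
    (hK : 0 < K) :
    (2 * r) ^ (γ - n) * (r ^ n * K) = 2 ^ (γ - n) * K ^ (1 - γ / n) * (r ^ n * K) ^ (γ / n) := by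
  have hn' : (n : ℝ) ≠ 0 := Nat.cast_ne_zero.2 hn
  rw [Real.mul_rpow (by positivity) hK.le, Real.mul_rpow two_pos.le hr.le, ← Real.rpow_natCast,
    ← Real.rpow_mul hr.le, mul_div_cancel₀ _ hn', Real.rpow_sub hr, Real.rpow_natCast,
    Real.rpow_sub hK, Real.rpow_one]
  field_simp

theorem rieszPotential_indicator_one {n : ℕ} {γ : ℝ} {S : Set (EuclideanSpace ℝ (Fin n))}
    (hS : MeasurableSet S) (x : EuclideanSpace ℝ (Fin n)) :
    rieszPotential n γ (S.indicator fun _ => 1) x = ∫ y in S, ‖x - y‖ ^ (γ - n) := by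
  rw [rieszPotential, ← integral_indicator hS]
  congr 1 with y
  by_cases hy : y ∈ S <;> simp [hy]

theorem two_mul_rpow_sub_mul_measureReal_le_rieszPotential_indicator_ball {n : ℕ} (hn : 0 < n)
    {γ : ℝ} (hγ0 : 0 < γ) (hγn : γ ≤ n) {z x : EuclideanSpace ℝ (Fin n)} {r : ℝ}
    (hx : x ∈ ball z r) :
    (2 * r) ^ (γ - n) * volume.real (ball z r) ≤
      rieszPotential n γ ((ball z r).indicator fun _ => 1) x := by
  have : Nontrivial (EuclideanSpace ℝ (Fin n)) :=
    Module.nontrivial_of_finrank_pos (R := ℝ) (by simpa using hn)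
  have hsub : ball z r ⊆ ball x (2 * r) := fun y hy => by
    rw [mem_ball] at hx hy ⊢
    linarith [dist_triangle_right y x z]
  rw [rieszPotential_indicator_one measurableSet_ball]
  refine mul_measureReal_le_setIntegral_norm_sub_rpow (by linarith) measurableSet_ball
    measure_ball_lt_top.ne (hsub.trans ball_subset_closedBall) ?_
  refine (integrableOn_ball_norm_sub_rpow ?_ ?_ x (2 * r)).mono_set hsub <;>
    simp only [finrank_euclideanSpace_fin] <;> linarith

/-- if `‖I_γ χ_B‖_{L^{p₂}(μ)} ≤ C · m(B)^{1/p₁}` for every ball `B`,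
then `μ(B) ≤ C' · m(B)^{p₂(1/p₁ - γ/n)}` for every ball `B`. -/
theorem trace_necessary_ball_growth (n : ℕ) (hn : 0 < n) (p1 p2 γ : ℝ)
    (μ : Measure (EuclideanSpace ℝ (Fin n)))
    (hp1 : 1 < p1) (h12 : p1 < p2) (hγ0 : 0 < γ) (hγn : γ < n)
    (C : ℝ≥0∞) (hC : C ≠ ⊤)
    (h : ∀ (z : EuclideanSpace ℝ (Fin n)) (r : ℝ), 0 < r →
      eLpNorm (rieszPotential n γ ((Metric.ball z r).indicator (fun _ => (1:ℝ))))
          (ENNReal.ofReal p2) μ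
        ≤ C * (volume (Metric.ball z r)) ^ (1 / p1)) :
    ∃ C' : ℝ≥0∞, C' ≠ ⊤ ∧ ∀ (z : EuclideanSpace ℝ (Fin n)) (r : ℝ), 0 < r →
      μ (Metric.ball z r) ≤ C' * (volume (Metric.ball z r)) ^ (p2 * (1 / p1 - γ / n)) := by
  have hp2 : 0 < p2 := by linarith
  set K := volume.real (ball (0 : EuclideanSpace ℝ (Fin n)) 1)
  have hK : 0 < K := ENNReal.toReal_pos (measure_ball_pos _ _ one_pos).ne' measure_ball_lt_top.ne
  set c := ENNReal.ofReal (2 ^ (γ - n) * K ^ (1 - γ / n))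
  have hc0 : c ≠ 0 := (ENNReal.ofReal_pos.2 (by positivity)).ne'
  refine ⟨(C / c) ^ p2, ENNReal.rpow_ne_top_of_nonneg hp2.le (ENNReal.div_ne_top hC hc0),
    fun z r hr => ?_⟩
  have hB0 : volume (ball z r) ≠ 0 := (measure_ball_pos _ _ hr).ne'
  have hV : volume.real (ball z r) = r ^ n * K := by
    simp only [measureReal_def, Measure.addHaar_ball_of_pos _ z hr, finrank_euclideanSpace_fin,
      ENNReal.toReal_mul, ENNReal.toReal_ofReal (by positivity : 0 ≤ r ^ n), K]
  have hlow : ∀ x ∈ ball z r, 2 ^ (γ - n) * K ^ (1 - γ / n) * volume.real (ball z r) ^ (γ / n) ≤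
      rieszPotential n γ ((ball z r).indicator fun _ => 1) x := fun x hx => by
    rw [hV, ← two_mul_rpow_sub_mul_pow_mul_eq hn.ne' hr hK, ← hV]
    exact two_mul_rpow_sub_mul_measureReal_le_rieszPotential_indicator_ball hn hγ0 hγn.le hx
  have hLp := (ofReal_mul_measure_rpow_le_eLpNorm measurableSet_ball (by positivity) hlow
    (by simpa using hp2) ofReal_ne_top).trans (h z r hr)
  rw [ENNReal.toReal_ofReal hp2.le, ENNReal.ofReal_mul (by positivity),
    ← ENNReal.ofReal_rpow_of_pos (x := volume.real (ball z r))
      (ENNReal.toReal_pos hB0 measure_ball_lt_top.ne),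
    ofReal_measureReal] at hLp
  exact ENNReal.le_div_rpow_mul_rpow_of_mul_rpow_mul_rpow_le hp2 hc0 ofReal_ne_top hB0
    measure_ball_lt_top.ne hLp
end

section
/- Let $n=1$, $1<p_1<p_2<\infty$, $0<\gamma<1/p_1$, $\beta=p_2(\frac{1}{p_1}-\gamma)\leq 1$, $\mu$ the measure with density $x^{\beta-1}\chi_{(0,\infty)}$, and $f=\chi_{\Omega_1}$ where $\Omega_1=\{1\leq|x|<2\}$. Then $\|I_\gamma f\|_{\dot K^{p_2}_{\lambda,q_2}(\mathbb{R},\mu)} = \infty$ whenever $\lambda \leq \gamma-\frac{1}{p_1}$ or $\lambda \geq 1-\frac{1}{p_1}$ (for any $1\leq q_2<\infty$), while $\|f\|_{\dot K^{p_1}_{\lambda,q_1}(\mathbb{R},m)}<\infty$. Hence the condition $\gamma-\frac{1}{p_1}<\lambda<1-\frac{1}{p_1}$ in the trace theorem is necessary. -/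
open MeasureTheory ENNReal

/-- The Riesz potential `I_γ f (x) = ∫ |x-y|^(γ-1) f(y) dy` on `ℝ`. -/
noncomputable def rieszPotential1 (γ : ℝ) (f : ℝ → ℝ) (x : ℝ) : ℝ :=
  ∫ y, |x - y| ^ (γ - 1) * f y

/-- The dyadic annulus `Ω_t = {x ∈ ℝ : 2^(t-1) ≤ |x| < 2^t}`. -/
def annulus1 (t : ℤ) : Set ℝ := {x | (2 : ℝ) ^ (t - 1) ≤ |x| ∧ |x| < (2 : ℝ) ^ t}

/-- The homogeneous Herz (quasi-)norm on `ℝ`: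
`‖f‖_{K̇^p_{λ,q}(ν)} = (∑_{t ∈ ℤ} 2^{tλq} ‖f χ_{Ω_t}‖_{L^p(ν)}^q)^{1/q}`. -/
noncomputable def herzNorm1 (p : ℝ≥0∞) (lam q : ℝ) (ν : Measure ℝ) (f : ℝ → ℝ) : ℝ≥0∞ :=
  (∑' t : ℤ, (2 : ℝ≥0∞) ^ ((t : ℝ) * lam * q) *
      (eLpNorm ((annulus1 t).indicator f) p ν) ^ q) ^ (1 / q)

/-- The measure on `ℝ` with density `x^(β-1) χ_{(0,∞)}(x)` w.r.t. Lebesgue measure. -/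
noncomputable def muBeta (β : ℝ) : Measure ℝ :=
  volume.withDensity (fun x => if 0 < x then ENNReal.ofReal (x ^ (β - 1)) else 0)

/-! For `t ≠ 1` and `x ∈ (2^{t-1}, 2^t) ⊆ Ω_t` one has `|x - y| ≤ 2^t + 2` on `Ω₁`, so
`I_γ χ_{Ω₁}(x) ≥ (2^t + 2)^{γ-1} |Ω₁|`; as `β ≤ 1`, that interval has `μ_β`-mass at least `2^{tβ}/2`.
Since `β/p₂ = 1/p₁ - γ`, the `t`-th Herz summand of `I_γ χ_{Ω₁}` is then at least a constant times
`(2^t)^{λ + 1/p₁ - γ} (2^t + 2)^{γ-1} ≥ 3^{γ-1}`, for every `t ≤ 0` if `λ ≤ γ - 1/p₁` and every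
`t ≥ 2` if `λ ≥ 1 - 1/p₁`, so the Herz series diverges. Meanwhile `χ_{Ω₁}` has a single nonzero
Herz summand. -/

open Set

lemma measurableSet_annulus1 (t : ℤ) : MeasurableSet (annulus1 t) :=
  measurable_abs measurableSet_Ico

lemma isBounded_annulus1 (t : ℤ) : Bornology.IsBounded (annulus1 t) :=
  (Metric.isBounded_closedBall (x := (0 : ℝ)) (r := 2 ^ t)).subset fun x hx => by
    simpa using hx.2.le

lemma Ioo_subset_annulus1 (t : ℤ) : Ioo ((2 : ℝ) ^ (t - 1)) (2 ^ t) ⊆ annulus1 t := by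
  intro x hx
  have hx0 : 0 < x := (_root_.zpow_pos two_pos _).trans hx.1
  exact ⟨(abs_of_pos hx0).symm ▸ hx.1.le, (abs_of_pos hx0).symm ▸ hx.2⟩

lemma disjoint_annulus1 {s t : ℤ} (h : s ≠ t) : Disjoint (annulus1 s) (annulus1 t) := by
  refine disjoint_left.2 fun x ⟨hs₁, hs₂⟩ ⟨ht₁, ht₂⟩ => h ?_
  have h₁ := (zpow_lt_zpow_iff_right₀ (by norm_num : (1 : ℝ) < 2)).1 (hs₁.trans_lt ht₂)
  have h₂ := (zpow_lt_zpow_iff_right₀ (by norm_num : (1 : ℝ) < 2)).1 (ht₁.trans_lt hs₂)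
  omega

lemma volume_real_annulus1_pos (t : ℤ) : 0 < volume.real (annulus1 t) := by
  have hIoo : 0 < volume (Ioo ((2 : ℝ) ^ (t - 1)) (2 ^ t)) :=
    (Measure.measure_Ioo_pos volume).2 (zpow_lt_zpow_right₀ (by norm_num) (by omega))
  exact ENNReal.toReal_pos (hIoo.trans_le (measure_mono (Ioo_subset_annulus1 t))).ne'
    (isBounded_annulus1 t).measure_lt_top.ne

lemma herzNorm1_eq_top_of_infinite {p : ℝ≥0∞} {lam q : ℝ} {ν : Measure ℝ} {f : ℝ → ℝ}
    (hq : 0 < q) {ε : ℝ≥0∞} (hε : ε ≠ 0)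
    (h : {t : ℤ | ε ≤ 2 ^ ((t : ℝ) * lam) * eLpNorm ((annulus1 t).indicator f) p ν}.Infinite) :
    herzNorm1 p lam q ν f = ⊤ := by
  have hsum : ∑' t : ℤ, (2 : ℝ≥0∞) ^ ((t : ℝ) * lam * q) *
      eLpNorm ((annulus1 t).indicator f) p ν ^ q = ⊤ := by
    by_contra hfin
    have hεq : ε ^ q ≠ 0 := by simp [ENNReal.rpow_eq_zero_iff, hε, hq.not_gt]
    refine (h.mono fun t ht => ?_) (ENNReal.finite_const_le_of_tsum_ne_top hfin hεq)
    simp only [mem_ofPred_eq, ENNReal.rpow_mul, ← ENNReal.mul_rpow_of_nonneg _ _ hq.le] at ht ⊢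
    exact ENNReal.rpow_le_rpow ht hq.le
  rw [herzNorm1, hsum]
  exact ENNReal.top_rpow_of_pos (by positivity)

lemma herzNorm1_indicator_annulus1_ne_top {p : ℝ≥0∞} {lam q : ℝ} (hq : 0 < q) (ν : Measure ℝ)
    [IsFiniteMeasureOnCompacts ν] (s : ℤ) (c : ℝ) :
    herzNorm1 p lam q ν ((annulus1 s).indicator fun _ => c) ≠ ⊤ := by
  have hvanish : ∀ t ≠ s, (2 : ℝ≥0∞) ^ ((t : ℝ) * lam * q) *
      eLpNorm ((annulus1 t).indicator ((annulus1 s).indicator fun _ => c)) p ν ^ q = 0 := by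
    intro t ht
    rw [indicator_indicator, (disjoint_annulus1 ht).inter_eq, indicator_empty, eLpNorm_zero',
      ENNReal.zero_rpow_of_pos hq, mul_zero]
  rw [herzNorm1, tsum_eq_single s hvanish, indicator_indicator, inter_self]
  have hnorm := (memLp_indicator_const p (measurableSet_annulus1 s) c
    (Or.inr ((isBounded_annulus1 s).measure_lt_top (μ := ν)).ne)).eLpNorm_lt_top
  refine ENNReal.rpow_ne_top_of_nonneg (by positivity) (ENNReal.mul_ne_top ?_ ?_)
  · exact ENNReal.rpow_ne_top_of_ne_zero two_ne_zero ENNReal.ofNat_ne_top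
  · exact ENNReal.rpow_ne_top_of_nonneg hq.le hnorm.ne

lemma rpow_mul_volume_real_le_rieszPotential1 {γ a b x : ℝ} {s : Set ℝ} (hs : MeasurableSet s)
    (hsf : volume s ≠ ⊤) (hγ : γ ≤ 1) (ha : 0 < a)
    (hab : ∀ y ∈ s, a ≤ |x - y| ∧ |x - y| ≤ b) :
    b ^ (γ - 1) * volume.real s ≤ rieszPotential1 γ (s.indicator fun _ => 1) x := by
  have hγ' : γ - 1 ≤ 0 := by linarith
  have hint : IntegrableOn (fun y => |x - y| ^ (γ - 1)) s := by
    refine Measure.integrableOn_of_bounded (M := a ^ (γ - 1)) hsf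
      (by fun_prop : Measurable fun y => |x - y| ^ (γ - 1)).aestronglyMeasurable ?_
    refine ae_restrict_of_forall_mem hs fun y hy => ?_
    rw [Real.norm_of_nonneg (by positivity)]
    exact Real.rpow_le_rpow_of_nonpos ha (hab y hy).1 hγ'
  have hriesz : rieszPotential1 γ (s.indicator fun _ => 1) x = ∫ y in s, |x - y| ^ (γ - 1) := by
    rw [rieszPotential1, ← integral_indicator hs]
    congr 1 with y
    by_cases hy : y ∈ s <;> simp [hy]
  rw [hriesz, mul_comm]
  exact setIntegral_ge_of_const_le hs hsf
    (fun y hy => Real.rpow_le_rpow_of_nonpos (ha.trans_le (hab y hy).1) (hab y hy).2 hγ') hint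

lemma add_two_rpow_mul_le_rieszPotential1 {γ x : ℝ} {t : ℤ} (hγ : γ ≤ 1) (ht : t ≠ 1)
    (hx : x ∈ Ioo ((2 : ℝ) ^ (t - 1)) (2 ^ t)) :
    ((2 : ℝ) ^ t + 2) ^ (γ - 1) * volume.real (annulus1 1) ≤
      rieszPotential1 γ ((annulus1 1).indicator fun _ => 1) x := by
  have hx0 : 0 < x := (_root_.zpow_pos two_pos _).trans hx.1
  have hy : ∀ y ∈ annulus1 1, 1 ≤ |y| ∧ |y| < 2 := fun y hy => by simpa [annulus1] using hy
  have hupper : ∀ y ∈ annulus1 1, |x - y| ≤ 2 ^ t + 2 := fun y hy' => by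
    have := abs_sub_le x 0 y
    simp only [sub_zero, zero_sub, abs_neg, abs_of_pos hx0] at this
    linarith [hx.2, (hy y hy').2]
  obtain ⟨a, ha, hlower⟩ : ∃ a > 0, ∀ y ∈ annulus1 1, a ≤ |x - y| := by
    rcases le_or_gt t 0 with ht0 | ht0
    · have hx1 : x < 1 := hx.2.trans_le (zpow_le_one_of_nonpos₀ (by norm_num) ht0)
      refine ⟨1 - x, by linarith, fun y hy' => ?_⟩
      have := abs_sub_abs_le_abs_sub y x
      rw [abs_sub_comm, abs_of_pos hx0] at this
      linarith [(hy y hy').1]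
    · have hx2 : 2 < x := by
        refine lt_of_le_of_lt ?_ hx.1
        simpa using zpow_le_zpow_right₀ (by norm_num : (1 : ℝ) ≤ 2) (by omega : (1 : ℤ) ≤ t - 1)
      refine ⟨x - 2, by linarith, fun y hy' => ?_⟩
      have := abs_sub_abs_le_abs_sub x y
      rw [abs_of_pos hx0] at this
      linarith [(hy y hy').2]
  exact rpow_mul_volume_real_le_rieszPotential1 (measurableSet_annulus1 1)
    (isBounded_annulus1 1).measure_lt_top.ne hγ ha fun y hy => ⟨hlower y hy, hupper y hy⟩

lemma ofReal_rpow_mul_volume_le_muBeta_Ioo {β a b : ℝ} (hβ : β ≤ 1) (ha : 0 ≤ a) :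
    ENNReal.ofReal (b ^ (β - 1)) * volume (Ioo a b) ≤ muBeta β (Ioo a b) := by
  rw [muBeta, withDensity_apply _ measurableSet_Ioo, ← setLIntegral_const]
  refine setLIntegral_mono' measurableSet_Ioo fun x hx => ?_
  have hx0 : 0 < x := ha.trans_lt hx.1
  rw [if_pos hx0]
  exact ENNReal.ofReal_le_ofReal (Real.rpow_le_rpow_of_nonpos hx0 hx.2.le (by linarith))

lemma ofReal_mul_rpow_le_eLpNorm_indicator {α : Type*} [MeasurableSpace α] {ν : Measure α}
    {p : ℝ≥0∞} {g : α → ℝ} {s S : Set α} {c : ℝ} (hs : MeasurableSet s) (hsS : s ⊆ S)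
    (hc : 0 ≤ c) (hg : ∀ x ∈ s, c ≤ g x) (hp0 : p ≠ 0) (hp : p ≠ ⊤) :
    ENNReal.ofReal c * ν s ^ (1 / p.toReal) ≤ eLpNorm (S.indicator g) p ν := by
  rw [← Real.enorm_of_nonneg hc, ← eLpNorm_indicator_const hs hp0 hp]
  refine eLpNorm_mono fun x => ?_
  by_cases hx : x ∈ s
  · rw [indicator_of_mem hx, indicator_of_mem (hsS hx), Real.norm_of_nonneg hc]
    exact (hg x hx).trans (le_abs_self _)
  · simp [indicator_of_notMem hx]

lemma three_rpow_le_rpow_mul_add_two_rpow_of_le_one {T e γ : ℝ} (hT0 : 0 < T) (hT1 : T ≤ 1)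
    (he : e ≤ 0) (hγ : γ ≤ 1) : (3 : ℝ) ^ (γ - 1) ≤ T ^ e * (T + 2) ^ (γ - 1) := by
  calc (3 : ℝ) ^ (γ - 1) ≤ (T + 2) ^ (γ - 1) :=
        Real.rpow_le_rpow_of_nonpos (by linarith) (by linarith) (by linarith)
    _ ≤ T ^ e * (T + 2) ^ (γ - 1) :=
        le_mul_of_one_le_left (by positivity) (Real.one_le_rpow_of_pos_of_le_one_of_nonpos hT0 hT1 he)

lemma three_rpow_le_rpow_mul_add_two_rpow_of_one_le {T e γ : ℝ} (hT : 1 ≤ T)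
    (he : 1 - γ ≤ e) (hγ : γ ≤ 1) : (3 : ℝ) ^ (γ - 1) ≤ T ^ e * (T + 2) ^ (γ - 1) := by
  have hT0 : 0 < T := by linarith
  calc (3 : ℝ) ^ (γ - 1) ≤ T ^ (e + (γ - 1)) * 3 ^ (γ - 1) :=
        le_mul_of_one_le_left (by positivity) (Real.one_le_rpow hT (by linarith))
    _ = T ^ e * (3 * T) ^ (γ - 1) := by
        rw [Real.rpow_add hT0, Real.mul_rpow (by norm_num) hT0.le]; ring
    _ ≤ T ^ e * (T + 2) ^ (γ - 1) := by
        gcongr T ^ e * ?_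
        exact Real.rpow_le_rpow_of_nonpos (by linarith) (by linarith) (by linarith)

lemma ofReal_le_two_rpow_mul_eLpNorm_rieszPotential1 {γ β lam p : ℝ} (hγ : γ ≤ 1) (hβ : β ≤ 1)
    (hp : 0 < p) {t : ℤ} (ht : t ≠ 1) :
    ENNReal.ofReal (((2 : ℝ) ^ t) ^ (lam + β / p) * ((2 : ℝ) ^ t + 2) ^ (γ - 1) *
        (volume.real (annulus1 1) / 2 ^ (1 / p))) ≤
      2 ^ ((t : ℝ) * lam) * eLpNorm ((annulus1 t).indicator
        (rieszPotential1 γ ((annulus1 1).indicator fun _ => 1))) (ENNReal.ofReal p) (muBeta β) := by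
  set T : ℝ := 2 ^ t
  have hT : 0 < T := _root_.zpow_pos two_pos t
  set c := (T + 2) ^ (γ - 1) * volume.real (annulus1 1)
  have hμ : ENNReal.ofReal (T ^ β / 2) ≤ muBeta β (Ioo (2 ^ (t - 1)) T) := by
    refine le_trans (le_of_eq ?_) (ofReal_rpow_mul_volume_le_muBeta_Ioo hβ (by positivity))
    rw [Real.volume_Ioo, zpow_sub_one₀ two_ne_zero, ← ENNReal.ofReal_mul (by positivity),
      Real.rpow_sub_one hT.ne']
    congr 1
    field_simp
    ring
  have hnorm : ENNReal.ofReal c * ENNReal.ofReal (T ^ β / 2) ^ (1 / p) ≤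
      eLpNorm ((annulus1 t).indicator (rieszPotential1 γ ((annulus1 1).indicator fun _ => 1)))
        (ENNReal.ofReal p) (muBeta β) := by
    have h := ofReal_mul_rpow_le_eLpNorm_indicator (ν := muBeta β) measurableSet_Ioo
      (Ioo_subset_annulus1 t) (by positivity)
      (fun x hx => add_two_rpow_mul_le_rieszPotential1 hγ ht hx)
      (by simpa using hp) ENNReal.ofReal_ne_top
    rw [ENNReal.toReal_ofReal hp.le] at h
    exact le_trans (by gcongr) h
  have h2 : (2 : ℝ≥0∞) ^ ((t : ℝ) * lam) = ENNReal.ofReal (T ^ lam) := by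
    rw [← ENNReal.ofReal_ofNat 2, ENNReal.ofReal_rpow_of_pos two_pos, Real.rpow_mul two_pos.le,
      Real.rpow_intCast]
  calc _ = ENNReal.ofReal (T ^ lam) *
        (ENNReal.ofReal c * ENNReal.ofReal (T ^ β / 2) ^ (1 / p)) := by
        rw [ENNReal.ofReal_rpow_of_nonneg (by positivity) (by positivity),
          ← ENNReal.ofReal_mul (by positivity), ← ENNReal.ofReal_mul (by positivity),
          Real.div_rpow (by positivity) two_pos.le, ← Real.rpow_mul hT.le,
          Real.rpow_add hT]
        congr 1
        simp only [c]
        ring_nf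
    _ ≤ _ := by rw [h2]; gcongr

theorem lambda_range_necessary_general (p1 p2 γ β lam q1 q2 : ℝ)
    (hp1 : 1 < p1) (h12 : p1 < p2) (hγ : γ < 1 / p1)
    (hβ : β = p2 * (1 / p1 - γ)) (hβ1 : β ≤ 1)
    (hq1 : 1 ≤ q1) (hq2 : 1 ≤ q2)
    (hlam : lam ≤ γ - 1 / p1 ∨ 1 - 1 / p1 ≤ lam) :
    herzNorm1 (ENNReal.ofReal p2) lam q2 (muBeta β)
        (rieszPotential1 γ ((annulus1 1).indicator (fun _ => (1 : ℝ)))) = ⊤ ∧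
    herzNorm1 (ENNReal.ofReal p1) lam q1 volume
        ((annulus1 1).indicator (fun _ => (1 : ℝ))) ≠ ⊤ := by
  have hp2 : 0 < p2 := by linarith
  have hγ1 : γ ≤ 1 := hγ.le.trans ((div_le_one (by linarith)).2 hp1.le)
  have hexp : lam + β / p2 = lam + 1 / p1 - γ := by rw [hβ]; field_simp; ring
  set C := volume.real (annulus1 1) / 2 ^ (1 / p2)
  have hC : 0 < C := div_pos (volume_real_annulus1_pos 1) (by positivity)
  refine ⟨herzNorm1_eq_top_of_infinite (by linarith) (ε := ENNReal.ofReal (3 ^ (γ - 1) * C))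
    (ENNReal.ofReal_pos.2 (by positivity)).ne' ?_,
    herzNorm1_indicator_annulus1_ne_top (by linarith) volume 1 1⟩
  have hterm : ∀ t : ℤ, t ≠ 1 →
      3 ^ (γ - 1) ≤ ((2 : ℝ) ^ t) ^ (lam + 1 / p1 - γ) * ((2 : ℝ) ^ t + 2) ^ (γ - 1) →
      ENNReal.ofReal (3 ^ (γ - 1) * C) ≤ 2 ^ ((t : ℝ) * lam) * eLpNorm ((annulus1 t).indicator
        (rieszPotential1 γ ((annulus1 1).indicator fun _ => 1))) (ENNReal.ofReal p2) (muBeta β) :=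
    fun t ht h => le_trans (ENNReal.ofReal_le_ofReal (by rw [hexp]; gcongr))
      (ofReal_le_two_rpow_mul_eLpNorm_rieszPotential1 hγ1 hβ1 hp2 ht)
  rcases hlam with hl | hl
  · refine (Iic_infinite 0).mono fun t ht => hterm t (by grind) ?_
    exact three_rpow_le_rpow_mul_add_two_rpow_of_le_one (_root_.zpow_pos two_pos t)
      (zpow_le_one_of_nonpos₀ (by norm_num) ht) (by linarith) hγ1
  · refine (Ici_infinite 2).mono fun t ht => hterm t (by grind) ?_
    exact three_rpow_le_rpow_mul_add_two_rpow_of_one_le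
      (one_le_zpow₀ (by norm_num) (by grind)) (by linarith) hγ1

/-- necessity of `γ - 1/p₁ < λ < 1 - 1/p₁`: with `f = χ_{Ω₁}` and
`μ = muBeta β`, `β = p₂(1/p₁-γ) ≤ 1`, if `λ ≤ γ - 1/p₁` or `λ ≥ 1 - 1/p₁` then
`‖I_γ f‖_{K̇^{p₂}_{λ,q₂}(μ)} = ∞` while `‖f‖_{K̇^{p₁}_{λ,q₁}(m)} < ∞`. -/
theorem lambda_range_necessary (p1 p2 γ β lam q1 q2 : ℝ)
    (hp1 : 1 < p1) (h12 : p1 < p2) (hγ0 : 0 < γ) (hγ : γ < 1 / p1)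
    (hβ : β = p2 * (1 / p1 - γ)) (hβ1 : β ≤ 1)
    (hq1 : 1 ≤ q1) (hq2 : 1 ≤ q2)
    (hlam : lam ≤ γ - 1 / p1 ∨ 1 - 1 / p1 ≤ lam) :
    herzNorm1 (ENNReal.ofReal p2) lam q2 (muBeta β)
        (rieszPotential1 γ ((annulus1 1).indicator (fun _ => (1 : ℝ)))) = ⊤ ∧
    herzNorm1 (ENNReal.ofReal p1) lam q1 volume
        ((annulus1 1).indicator (fun _ => (1 : ℝ))) ≠ ⊤ :=
  lambda_range_necessary_general p1 p2 γ β lam q1 q2 hp1 h12 hγ hβ hβ1 hq1 hq2 hlam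
end

section
/- (Necessity of $q_1\leq q_2$.) Let $n=1$, $1<p_1<p_2<\infty$, $0<\gamma<1/p_1$, $\gamma-\frac1{p_1}<\lambda<1-\frac1{p_1}$, $\beta=p_2(\frac1{p_1}-\gamma)\leq1$, and $\mu$ the measure with density $x^{\beta-1}\chi_{(0,\infty)}$. If there exists $C$ with $\|I_\gamma f\|_{\dot K^{p_2}_{\lambda,q_2}(\mathbb{R},\mu)} \leq C\|f\|_{\dot K^{p_1}_{\lambda,q_1}(\mathbb{R},m)}$ for all $f$, then $q_1\leq q_2$. -/
open MeasureTheory ENNReal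

/-!
Test the inequality on `f_k = x^{-(λ + 1/p₁)} χ_{(1, 2^k)}`. On each of the `k` dyadic annuli
`Ω_t` it meets, `f_k` is comparable to `2^{-t(λ + 1/p₁)}`, and the weights `2^{tλ}` make every
annulus contribute a bounded amount, so `‖f_k‖_{K̇^{p₁}_{λ,q₁}} ≲ k^{1/q₁}`. Conversely, on
`(2^{t-1}, 2^t)` the self-interaction of `f_k` alone gives `I_γ f_k ≳ 2^{-t(λ + 1/p₁)} 2^{tγ}`;
with `μ(2^{t-1}, 2^t) ≳ 2^{tβ}` and `β = p₂(1/p₁ - γ)` the powers of `2^t` cancel again, so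
`‖I_γ f_k‖_{K̇^{p₂}_{λ,q₂}(μ)} ≳ k^{1/q₂}`. Hence `k^{1/q₂} ≲ k^{1/q₁}` for all `k`, i.e.
`q₁ ≤ q₂`.
-/

open MeasureTheory ENNReal Set Filter

lemma le_of_forall_natCast_rpow_mul_le {a b c M : ℝ} (hc : 0 < c)
    (h : ∀ k : ℕ, (k : ℝ) ^ a * c ≤ (k : ℝ) ^ b * M) : a ≤ b := by
  by_contra! hba
  have hlim : Tendsto (fun k : ℕ => (k : ℝ) ^ (a - b)) atTop atTop :=
    (tendsto_rpow_atTop (sub_pos.2 hba)).comp tendsto_natCast_atTop_atTop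
  obtain ⟨k, hkM, hk1⟩ := ((hlim.eventually_gt_atTop (M / c)).and (eventually_ge_atTop 1)).exists
  have hk0 : (0 : ℝ) < k := by exact_mod_cast hk1
  rw [Real.rpow_sub hk0, div_lt_div_iff₀ hc (Real.rpow_pos_of_pos hk0 b)] at hkM
  linarith [h k]

lemma ENNReal.le_of_forall_natCast_rpow_mul_le {a b : ℝ} {c M : ℝ≥0∞} (hb : 0 ≤ b)
    (hc₀ : c ≠ 0) (hc : c ≠ ⊤) (hM : M ≠ ⊤)
    (h : ∀ k : ℕ, (k : ℝ≥0∞) ^ a * c ≤ (k : ℝ≥0∞) ^ b * M) : a ≤ b := by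
  refine _root_.le_of_forall_natCast_rpow_mul_le (toReal_pos hc₀ hc) (M := M.toReal) fun k => ?_
  have := toReal_mono (mul_ne_top (rpow_ne_top_of_nonneg hb (natCast_ne_top k)) hM) (h k)
  simpa only [toReal_mul, ← toReal_rpow, toReal_natCast] using this

lemma ofReal_two_rpow (e : ℝ) : ENNReal.ofReal ((2 : ℝ) ^ e) = 2 ^ e := by
  rw [← ofReal_rpow_of_pos two_pos, ofReal_ofNat]

lemma sum_const_rpow_rpow_one_div {ι : Type*} {q : ℝ} (hq : 0 < q) (s : Finset ι) (c : ℝ≥0∞) :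
    (∑ _i ∈ s, c ^ q) ^ (1 / q) = (s.card : ℝ≥0∞) ^ (1 / q) * c := by
  rw [Finset.sum_const, nsmul_eq_mul, mul_rpow_of_nonneg _ _ (by positivity), ← rpow_mul,
    mul_one_div_cancel hq.ne', rpow_one]

section HerzNorm

variable {p : ℝ≥0∞} {lam q : ℝ} {ν : Measure ℝ} {f : ℝ → ℝ} {s : Finset ℤ} {c : ℝ≥0∞}

lemma herzNorm1_eq_tsum (hq : 0 ≤ q) :
    herzNorm1 p lam q ν f =
      (∑' t : ℤ, (2 ^ ((t : ℝ) * lam) * eLpNorm ((annulus1 t).indicator f) p ν) ^ q) ^ (1 / q) := by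
  simp only [herzNorm1, mul_rpow_of_nonneg _ _ hq, ← rpow_mul]

lemma herzNorm1_le_card_rpow_mul (hq : 0 < q) (hs : ∀ t ∉ s, (annulus1 t).indicator f = 0)
    (hc : ∀ t ∈ s, 2 ^ ((t : ℝ) * lam) * eLpNorm ((annulus1 t).indicator f) p ν ≤ c) :
    herzNorm1 p lam q ν f ≤ (s.card : ℝ≥0∞) ^ (1 / q) * c := by
  rw [herzNorm1_eq_tsum hq.le,
    tsum_eq_sum (s := s) fun t ht => by simp [hs t ht, zero_rpow_of_pos hq],
    ← sum_const_rpow_rpow_one_div hq]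
  gcongr with t ht
  exact hc t ht

lemma card_rpow_mul_le_herzNorm1 (hq : 0 < q)
    (hc : ∀ t ∈ s, c ≤ 2 ^ ((t : ℝ) * lam) * eLpNorm ((annulus1 t).indicator f) p ν) :
    (s.card : ℝ≥0∞) ^ (1 / q) * c ≤ herzNorm1 p lam q ν f := by
  rw [herzNorm1_eq_tsum hq.le, ← sum_const_rpow_rpow_one_div hq]
  gcongr
  exact (Finset.sum_le_sum fun t ht => by gcongr; exact hc t ht).trans (ENNReal.sum_le_tsum s)

end HerzNorm

lemma mem_annulus1 {t : ℤ} {x : ℝ} :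
    x ∈ annulus1 t ↔ (2 : ℝ) ^ ((t : ℝ) - 1) ≤ |x| ∧ |x| < (2 : ℝ) ^ (t : ℝ) := by
  simp only [annulus1, mem_ofPred_eq, ← Real.rpow_intCast, Int.cast_sub, Int.cast_one]

lemma volume_annulus1_le (t : ℤ) : volume (annulus1 t) ≤ 2 ^ ((t : ℝ) + 1) := by
  calc volume (annulus1 t) ≤ volume (Ioo (-(2 : ℝ) ^ (t : ℝ)) (2 ^ (t : ℝ))) :=
        measure_mono fun x hx => abs_lt.1 (mem_annulus1.1 hx).2
    _ = 2 ^ ((t : ℝ) + 1) := by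
        rw [Real.volume_Ioo, sub_neg_eq_add, ← two_mul, mul_comm,
          ← Real.rpow_add_one two_ne_zero, ofReal_two_rpow]

lemma two_rpow_sub_two_rpow_sub_one (e : ℝ) : (2 : ℝ) ^ e - 2 ^ (e - 1) = 2 ^ (e - 1) := by
  rw [Real.rpow_sub_one two_ne_zero]
  ring

lemma Ioo_two_rpow_subset_annulus1 (t : ℤ) :
    Ioo ((2 : ℝ) ^ ((t : ℝ) - 1)) (2 ^ (t : ℝ)) ⊆ annulus1 t := fun x hx => by
  have hx0 : 0 < x := (Real.rpow_pos_of_pos two_pos _).trans hx.1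
  rw [mem_annulus1, abs_of_pos hx0]
  exact ⟨hx.1.le, hx.2⟩

section LpBounds

variable {α E : Type*} [MeasurableSpace α] [NormedAddCommGroup E] {μ : Measure α} {p : ℝ≥0∞}
  {s u : Set α} {f : α → E} {c : ℝ≥0∞}

lemma eLpNorm_indicator_le_mul_measure_rpow (h : ∀ x ∈ s, ‖f x‖ₑ ≤ c) :
    eLpNorm (s.indicator f) p μ ≤ c * μ s ^ (1 / p.toReal) :=
  calc eLpNorm (s.indicator f) p μ ≤ eLpNorm (s.indicator fun _ => c) p μ :=
        eLpNorm_mono_enorm fun x => by by_cases hx : x ∈ s <;> simp [hx, h x]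
    _ ≤ c * μ s ^ (1 / p.toReal) := by simpa using eLpNorm_indicator_const_le c p

lemma mul_measure_rpow_le_eLpNorm_indicator (hs : MeasurableSet s) (hsu : s ⊆ u) (hp₀ : p ≠ 0)
    (hp : p ≠ ⊤) (h : ∀ x ∈ s, c ≤ ‖f x‖ₑ) :
    c * μ s ^ (1 / p.toReal) ≤ eLpNorm (u.indicator f) p μ :=
  calc c * μ s ^ (1 / p.toReal) = eLpNorm (s.indicator fun _ => c) p μ := by
        rw [eLpNorm_indicator_const hs hp₀ hp, enorm_eq_self]
    _ ≤ eLpNorm (u.indicator f) p μ :=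
        eLpNorm_mono_enorm fun x => by
          by_cases hx : x ∈ s
          · simp [hx, hsu hx, h x]
          · simp [hx]

end LpBounds

lemma integrableOn_abs_sub_rpow {r : ℝ} (hr : -1 < r) (x : ℝ) {s : Set ℝ} (hs : IsCompact s) :
    IntegrableOn (fun y => |x - y| ^ r) s := by
  have hloc : LocallyIntegrable (fun z : ℝ => |z| ^ r) := by
    refine locallyIntegrable_of_norm_le_rpow (C := 1) (α := -r) (by simp) (by simp; linarith)
      (ae_of_all _ fun z => ?_) (measurable_abs.pow_const r).aestronglyMeasurable
    simp [abs_of_nonneg (Real.rpow_nonneg (abs_nonneg z) r)]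
  rw [← Measure.map_sub_left_eq_self volume x] at hloc
  exact ((locallyIntegrable_map_homeomorph (Homeomorph.subLeft x)).1 hloc).integrableOn_isCompact hs

lemma mul_rpow_le_rieszPotential1 {γ : ℝ} (hγ : γ ≤ 1) {f : ℝ → ℝ} (hf : 0 ≤ f) {x L U b : ℝ}
    (hint : Integrable fun y => |x - y| ^ (γ - 1) * f y) (hLU : L < U) (hx : x ∈ Icc L U)
    (hb : ∀ y ∈ Ioo L U, b ≤ f y) : b * (U - L) ^ γ ≤ rieszPotential1 γ f x := by
  -- the diagonal `y = x` is removed since there the kernel takes the junk value `0 ^ (γ - 1) = 0`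
  have hvol : volume (Ioo L U \ {x}) = ENNReal.ofReal (U - L) := by
    rw [measure_sdiff_null (Real.volume_singleton), Real.volume_Ioo]
  have hpt : ∀ y ∈ Ioo L U \ {x}, (U - L) ^ (γ - 1) * b ≤ |x - y| ^ (γ - 1) * f y := by
    rintro y ⟨hy, hyx⟩
    have hxy : 0 < |x - y| := abs_pos.2 (sub_ne_zero.2 (Ne.symm hyx))
    have hxyU : |x - y| ≤ U - L := abs_le.2 ⟨by linarith [hx.1, hy.2], by linarith [hx.2, hy.1]⟩
    calc (U - L) ^ (γ - 1) * b ≤ (U - L) ^ (γ - 1) * f y :=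
          mul_le_mul_of_nonneg_left (hb y hy) (Real.rpow_nonneg (by linarith) _)
      _ ≤ |x - y| ^ (γ - 1) * f y :=
          mul_le_mul_of_nonneg_right (Real.rpow_le_rpow_of_nonpos hxy hxyU (by linarith)) (hf y)
  calc b * (U - L) ^ γ = (U - L) ^ (γ - 1) * b * volume.real (Ioo L U \ {x}) := by
        rw [measureReal_def, hvol, toReal_ofReal (by linarith), mul_right_comm,
          ← Real.rpow_add_one (by linarith), sub_add_cancel, mul_comm]
    _ ≤ ∫ y in Ioo L U \ {x}, |x - y| ^ (γ - 1) * f y :=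
        setIntegral_ge_of_const_le_real (measurableSet_Ioo.diff (measurableSet_singleton x))
          (by rw [hvol]; exact ofReal_ne_top) hpt hint.integrableOn
    _ ≤ rieszPotential1 γ f x :=
        setIntegral_le_integral hint
          (ae_of_all _ fun y => mul_nonneg (Real.rpow_nonneg (abs_nonneg _) _) (hf y))

lemma ofReal_rpow_mul_volume_le_muBeta {β : ℝ} (hβ : β ≤ 1) {L U : ℝ} (hL : 0 < L) :
    ENNReal.ofReal (U ^ (β - 1)) * volume (Ioo L U) ≤ muBeta β (Ioo L U) := by
  rw [muBeta, withDensity_apply _ measurableSet_Ioo, ← setLIntegral_const]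
  refine setLIntegral_mono' measurableSet_Ioo fun y hy => ?_
  have hy0 : 0 < y := hL.trans hy.1
  rw [if_pos hy0]
  exact ofReal_le_ofReal (Real.rpow_le_rpow_of_nonpos hy0 hy.2.le (by linarith))

noncomputable def truncatedPower (a : ℝ) (k : ℕ) : ℝ → ℝ :=
  (Ioo 1 (2 ^ k)).indicator fun x => x ^ (-a)

section TruncatedPower

variable {a : ℝ} {k : ℕ}

lemma measurable_truncatedPower : Measurable (truncatedPower a k) :=
  (measurable_id.pow_const _).indicator measurableSet_Ioo

lemma truncatedPower_nonneg : 0 ≤ truncatedPower a k :=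
  indicator_nonneg fun y hy => Real.rpow_nonneg (by linarith [hy.1]) _

lemma truncatedPower_of_mem {x : ℝ} (hx : x ∈ Ioo 1 (2 ^ k)) : truncatedPower a k x = x ^ (-a) :=
  indicator_of_mem hx _

lemma truncatedPower_le_rpow (ha : 0 ≤ a) {x r : ℝ} (hr : 0 < r) (hrx : r ≤ |x|) :
    truncatedPower a k x ≤ r ^ (-a) := by
  by_cases hx : x ∈ Ioo 1 (2 ^ k)
  · rw [truncatedPower_of_mem hx, ← abs_of_pos (zero_lt_one.trans hx.1)]
    exact Real.rpow_le_rpow_of_nonpos hr hrx (by linarith)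
  · rw [truncatedPower, indicator_of_notMem hx]
    exact Real.rpow_nonneg hr.le _

lemma truncatedPower_le_one (ha : 0 ≤ a) (x : ℝ) : truncatedPower a k x ≤ 1 := by
  by_cases hx : x ∈ Ioo 1 (2 ^ k)
  · rw [truncatedPower_of_mem hx]
    exact Real.rpow_le_one_of_one_le_of_nonpos hx.1.le (by linarith)
  · rw [truncatedPower, indicator_of_notMem hx]
    exact zero_le_one

lemma annulus1_indicator_truncatedPower {t : ℤ} (ht : t ∉ Finset.Icc 1 (k : ℤ)) :
    (annulus1 t).indicator (truncatedPower a k) = 0 := by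
  ext x
  refine indicator_apply_eq_zero.2 fun hxt => indicator_of_notMem (fun hx => ht ?_) _
  have hx0 : 0 < x := zero_lt_one.trans hx.1
  obtain ⟨hlo, hhi⟩ := hxt
  rw [abs_of_pos hx0] at hlo hhi
  have h0 : (2 : ℝ) ^ (0 : ℤ) < 2 ^ t := by rw [zpow_zero]; exact hx.1.trans hhi
  have hk : (2 : ℝ) ^ (t - 1) < 2 ^ (k : ℤ) := by rw [zpow_natCast]; exact hlo.trans_lt hx.2
  rw [zpow_lt_zpow_iff_right₀ (one_lt_two : (1 : ℝ) < 2)] at h0 hk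
  exact Finset.mem_Icc.2 ⟨by omega, by omega⟩

lemma integrable_abs_sub_rpow_mul_truncatedPower {γ : ℝ} (hγ : 0 < γ) (ha : 0 ≤ a) (x : ℝ) :
    Integrable fun y => |x - y| ^ (γ - 1) * truncatedPower a k y := by
  have hK : IntegrableOn (fun y => |x - y| ^ (γ - 1) * truncatedPower a k y) (Icc 1 (2 ^ k)) :=
    (integrableOn_abs_sub_rpow (by linarith) x isCompact_Icc).mul_bdd (c := 1)
      measurable_truncatedPower.aestronglyMeasurable (ae_of_all _ fun y => by
      rw [Real.norm_of_nonneg (truncatedPower_nonneg y)]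
      exact truncatedPower_le_one ha y)
  refine hK.integrable_of_forall_notMem_eq_zero fun y hy => ?_
  rw [truncatedPower, indicator_of_notMem fun h => hy (Ioo_subset_Icc_self h), mul_zero]

end TruncatedPower

lemma herzNorm1_truncatedPower_le {p lam q : ℝ} (hp : 0 < p) (hq : 0 < q) (ha : 0 ≤ lam + 1 / p)
    (k : ℕ) :
    herzNorm1 (ENNReal.ofReal p) lam q volume (truncatedPower (lam + 1 / p) k) ≤
      (k : ℝ≥0∞) ^ (1 / q) * 2 ^ (lam + 2 / p) := by
  have hcard : ((Finset.Icc 1 (k : ℤ)).card : ℝ≥0∞) = k := by simp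
  rw [← hcard]
  refine herzNorm1_le_card_rpow_mul hq (fun t ht => annulus1_indicator_truncatedPower ht)
    fun t _ => ?_
  have hf : ∀ x ∈ annulus1 t,
      ‖truncatedPower (lam + 1 / p) k x‖ₑ ≤ 2 ^ (((t : ℝ) - 1) * -(lam + 1 / p)) := by
    intro x hx
    rw [Real.enorm_eq_ofReal (truncatedPower_nonneg x), ← ofReal_two_rpow,
      Real.rpow_mul zero_le_two]
    exact ofReal_le_ofReal (truncatedPower_le_rpow ha (by positivity) (mem_annulus1.1 hx).1)
  calc 2 ^ ((t : ℝ) * lam) *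
        eLpNorm ((annulus1 t).indicator (truncatedPower (lam + 1 / p) k)) (ENNReal.ofReal p) volume
      ≤ 2 ^ ((t : ℝ) * lam) *
          (2 ^ (((t : ℝ) - 1) * -(lam + 1 / p)) * (2 ^ ((t : ℝ) + 1)) ^ (1 / p)) := by
        gcongr
        refine (eLpNorm_indicator_le_mul_measure_rpow hf).trans ?_
        rw [toReal_ofReal hp.le]
        gcongr
        exact volume_annulus1_le t
    _ = 2 ^ (lam + 2 / p) := by
        simp only [← rpow_mul, ← rpow_add _ _ two_ne_zero ofNat_ne_top]
        congr 1
        field_simp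
        ring

lemma two_rpow_le_rieszPotential1_truncatedPower {γ a : ℝ} {k : ℕ} (hγ₀ : 0 < γ) (hγ₁ : γ ≤ 1)
    (ha : 0 ≤ a) {t : ℤ} (ht : t ∈ Finset.Icc 1 (k : ℤ)) {x : ℝ}
    (hx : x ∈ Ioo ((2 : ℝ) ^ ((t : ℝ) - 1)) (2 ^ (t : ℝ))) :
    (2 : ℝ) ^ ((t : ℝ) * -a + ((t : ℝ) - 1) * γ) ≤ rieszPotential1 γ (truncatedPower a k) x := by
  obtain ⟨ht₁, htk⟩ := Finset.mem_Icc.1 ht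
  set L := (2 : ℝ) ^ ((t : ℝ) - 1)
  set U := (2 : ℝ) ^ (t : ℝ)
  have hUL : U - L = L := two_rpow_sub_two_rpow_sub_one _
  have hL₁ : 1 ≤ L := Real.one_le_rpow one_le_two (by rw [sub_nonneg]; exact_mod_cast ht₁)
  have hUk : U ≤ 2 ^ k := by
    rw [← Real.rpow_natCast]
    exact Real.rpow_le_rpow_of_exponent_le one_le_two (by exact_mod_cast htk)
  have hb : ∀ y ∈ Ioo L U, U ^ (-a) ≤ truncatedPower a k y := fun y hy => by
    rw [truncatedPower_of_mem ⟨hL₁.trans_lt hy.1, hy.2.trans_le hUk⟩]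
    exact Real.rpow_le_rpow_of_nonpos (by linarith [hy.1]) hy.2.le (by linarith)
  calc (2 : ℝ) ^ ((t : ℝ) * -a + ((t : ℝ) - 1) * γ) = U ^ (-a) * (U - L) ^ γ := by
        rw [hUL, Real.rpow_add two_pos, Real.rpow_mul zero_le_two, Real.rpow_mul zero_le_two]
    _ ≤ rieszPotential1 γ (truncatedPower a k) x :=
        mul_rpow_le_rieszPotential1 hγ₁ truncatedPower_nonneg
          (integrable_abs_sub_rpow_mul_truncatedPower hγ₀ ha x) (by linarith)
          (Ioo_subset_Icc_self hx) hb

lemma herzNorm1_rieszPotential1_truncatedPower_ge {p₁ p₂ γ β lam q : ℝ} (hp₂ : 0 < p₂)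
    (hγ₀ : 0 < γ) (hγ₁ : γ ≤ 1) (ha : 0 ≤ lam + 1 / p₁) (hβ : β = p₂ * (1 / p₁ - γ))
    (hβ₁ : β ≤ 1) (hq : 0 < q) (k : ℕ) :
    (k : ℝ≥0∞) ^ (1 / q) * 2 ^ (-(γ + 1 / p₂)) ≤
      herzNorm1 (ENNReal.ofReal p₂) lam q (muBeta β)
        (rieszPotential1 γ (truncatedPower (lam + 1 / p₁) k)) := by
  have hcard : ((Finset.Icc 1 (k : ℤ)).card : ℝ≥0∞) = k := by simp
  rw [← hcard]
  refine card_rpow_mul_le_herzNorm1 hq fun t ht => ?_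
  set L := (2 : ℝ) ^ ((t : ℝ) - 1)
  set U := (2 : ℝ) ^ (t : ℝ)
  have hL : 0 < L := by positivity
  have hUL : U - L = L := two_rpow_sub_two_rpow_sub_one _
  have hμ : 2 ^ ((t : ℝ) * (β - 1) + ((t : ℝ) - 1)) ≤ muBeta β (Ioo L U) := by
    refine (le_of_eq ?_).trans (ofReal_rpow_mul_volume_le_muBeta hβ₁ hL)
    rw [Real.volume_Ioo, hUL, ← Real.rpow_mul zero_le_two, ← ofReal_mul (by positivity),
      ← Real.rpow_add two_pos, ofReal_two_rpow, mul_comm (t : ℝ)]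
  have hI : ∀ x ∈ Ioo L U, 2 ^ ((t : ℝ) * -(lam + 1 / p₁) + ((t : ℝ) - 1) * γ) ≤
      ‖rieszPotential1 γ (truncatedPower (lam + 1 / p₁) k) x‖ₑ := fun x hx => by
    rw [← ofReal_two_rpow, Real.enorm_eq_ofReal_abs]
    exact ofReal_le_ofReal
      ((two_rpow_le_rieszPotential1_truncatedPower hγ₀ hγ₁ ha ht hx).trans (le_abs_self _))
  calc 2 ^ (-(γ + 1 / p₂))
      = 2 ^ ((t : ℝ) * lam) * (2 ^ ((t : ℝ) * -(lam + 1 / p₁) + ((t : ℝ) - 1) * γ) *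
          (2 ^ ((t : ℝ) * (β - 1) + ((t : ℝ) - 1))) ^ (1 / p₂)) := by
        simp only [← rpow_mul, ← rpow_add _ _ two_ne_zero ofNat_ne_top]
        congr 1
        subst hβ
        field_simp
        ring
    _ ≤ 2 ^ ((t : ℝ) * lam) * (2 ^ ((t : ℝ) * -(lam + 1 / p₁) + ((t : ℝ) - 1) * γ) *
          muBeta β (Ioo L U) ^ (1 / (ENNReal.ofReal p₂).toReal)) := by
        rw [toReal_ofReal hp₂.le]
        gcongr
    _ ≤ 2 ^ ((t : ℝ) * lam) * eLpNorm ((annulus1 t).indicator (rieszPotential1 γ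
          (truncatedPower (lam + 1 / p₁) k))) (ENNReal.ofReal p₂) (muBeta β) := by
        gcongr
        exact mul_measure_rpow_le_eLpNorm_indicator measurableSet_Ioo
          (Ioo_two_rpow_subset_annulus1 t) (by simpa using hp₂) ofReal_ne_top hI

theorem q_monotonicity_necessary_general (p1 p2 γ β lam q1 q2 : ℝ)
    (hp1 : 1 < p1) (h12 : p1 < p2) (hγ0 : 0 < γ) (hγ : γ < 1 / p1)
    (hlam1 : γ - 1 / p1 < lam)
    (hβ : β = p2 * (1 / p1 - γ)) (hβ1 : β ≤ 1)
    (hq1 : 1 ≤ q1) (hq2 : 1 ≤ q2)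
    (C : ℝ≥0∞) (hC : C ≠ ⊤)
    (h : ∀ f : ℝ → ℝ, Measurable f →
      herzNorm1 (ENNReal.ofReal p2) lam q2 (muBeta β) (rieszPotential1 γ f)
        ≤ C * herzNorm1 (ENNReal.ofReal p1) lam q1 volume f) :
    q1 ≤ q2 := by
  have hp1₀ : 0 < p1 := by linarith
  have hγ1 : γ ≤ 1 := hγ.le.trans ((div_le_one hp1₀).2 hp1.le)
  have ha : 0 ≤ lam + 1 / p1 := by linarith
  have hgrowth : ∀ k : ℕ, (k : ℝ≥0∞) ^ (1 / q2) * 2 ^ (-(γ + 1 / p2)) ≤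
      (k : ℝ≥0∞) ^ (1 / q1) * (C * 2 ^ (lam + 2 / p1)) := fun k =>
    calc (k : ℝ≥0∞) ^ (1 / q2) * 2 ^ (-(γ + 1 / p2))
        ≤ herzNorm1 (ENNReal.ofReal p2) lam q2 (muBeta β)
            (rieszPotential1 γ (truncatedPower (lam + 1 / p1) k)) :=
          herzNorm1_rieszPotential1_truncatedPower_ge (by linarith) hγ0 hγ1 ha hβ hβ1
            (by linarith) k
      _ ≤ C * herzNorm1 (ENNReal.ofReal p1) lam q1 volume (truncatedPower (lam + 1 / p1) k) :=
          h _ measurable_truncatedPower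
      _ ≤ C * ((k : ℝ≥0∞) ^ (1 / q1) * 2 ^ (lam + 2 / p1)) := by
          gcongr
          exact herzNorm1_truncatedPower_le hp1₀ (by linarith) ha k
      _ = (k : ℝ≥0∞) ^ (1 / q1) * (C * 2 ^ (lam + 2 / p1)) := mul_left_comm _ _ _
  have htwo (e : ℝ) : (2 : ℝ≥0∞) ^ e ≠ ⊤ := rpow_ne_top_of_nonneg' two_pos ofNat_ne_top
  have hexp : 1 / q2 ≤ 1 / q1 :=
    ENNReal.le_of_forall_natCast_rpow_mul_le (by positivity) (by positivity) (htwo _)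
      (mul_ne_top hC (htwo _)) hgrowth
  exact (one_div_le_one_div (by linarith) (by linarith)).1 hexp

/-- necessity of `q₁ ≤ q₂`: if the trace inequality
`‖I_γ f‖_{K̇^{p₂}_{λ,q₂}(μ)} ≤ C ‖f‖_{K̇^{p₁}_{λ,q₁}(m)}` holds for all `f`,
with `μ = muBeta β`, `β = p₂(1/p₁-γ) ≤ 1`, then `q₁ ≤ q₂`. -/
theorem q_monotonicity_necessary (p1 p2 γ β lam q1 q2 : ℝ)
    (hp1 : 1 < p1) (h12 : p1 < p2) (hγ0 : 0 < γ) (hγ : γ < 1 / p1)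
    (hlam1 : γ - 1 / p1 < lam) (hlam2 : lam < 1 - 1 / p1)
    (hβ : β = p2 * (1 / p1 - γ)) (hβ1 : β ≤ 1)
    (hq1 : 1 ≤ q1) (hq2 : 1 ≤ q2)
    (C : ℝ≥0∞) (hC : C ≠ ⊤)
    (h : ∀ f : ℝ → ℝ, Measurable f →
      herzNorm1 (ENNReal.ofReal p2) lam q2 (muBeta β) (rieszPotential1 γ f)
        ≤ C * herzNorm1 (ENNReal.ofReal p1) lam q1 volume f) :
    q1 ≤ q2 :=
  q_monotonicity_necessary_general p1 p2 γ β lam q1 q2 hp1 h12 hγ0 hγ hlam1 hβ hβ1 hq1 hq2 C hC h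
end
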